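/- arXiv:1512.08628 — 2 statements merged into one kernel-verified Lean document; each statement's English description precedes it below -/
import Mathlib

section
/- If T : X → Y is an interval preserving lattice homomorphism between Banach lattices with dense range and K ⊆ X satisfies I(K) = X, then I(T(K)) = Y. Consequently, such an image of an IWCG Banach lattice is IWCG. -/
open Filter Topology Set

section Defs

variable {E : Type*} [NormedAddCommGroup E] [NormedSpace ℝ E]

/-- A set is weakly compact if it is compact in the weak topology. -/
def WeaklyCompact (K : Set E) : Prop := IsCompact (toWeakSpace ℝ E '' K)

/-- A set is weakly precompact if every sequence in it has a weakly Cauchy subsequence. -/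
def WeaklyPrecompact (K : Set E) : Prop :=
  ∀ x : ℕ → E, (∀ n, x n ∈ K) → ∃ φ : ℕ → ℕ, StrictMono φ ∧
    ∀ f : E →L[ℝ] ℝ, ∃ l : ℝ, Tendsto (fun n => f (x (φ n))) atTop (𝓝 l)

end Defs

section LatDefs

variable {E : Type*} [NormedAddCommGroup E] [Lattice E] [NormedSpace ℝ E]

/-- A closed sublattice: a closed linear subspace closed under `⊔` and `⊓`. -/
def IsClosedSublattice (S : Set E) : Prop :=
  IsClosed S ∧ (0 : E) ∈ S ∧ (∀ x ∈ S, ∀ y ∈ S, x + y ∈ S) ∧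
    (∀ c : ℝ, ∀ x ∈ S, c • x ∈ S) ∧
    (∀ x ∈ S, ∀ y ∈ S, x ⊔ y ∈ S) ∧ (∀ x ∈ S, ∀ y ∈ S, x ⊓ y ∈ S)

/-- `L(A)`: the smallest closed sublattice containing `A`. -/
def sublatticeGen (A : Set E) : Set E := ⋂₀ {S | IsClosedSublattice S ∧ A ⊆ S}

/-- The solid hull of a set. -/
def solidHull (A : Set E) : Set E := ⋃ x ∈ A, Set.Icc (-|x|) |x|

/-- A closed ideal: a closed linear subspace which is solid. -/
def IsClosedIdeal (S : Set E) : Prop :=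
  IsClosed S ∧ (0 : E) ∈ S ∧ (∀ x ∈ S, ∀ y ∈ S, x + y ∈ S) ∧
    (∀ c : ℝ, ∀ x ∈ S, c • x ∈ S) ∧
    (∀ x : E, ∀ y ∈ S, |x| ≤ |y| → x ∈ S)

/-- `I(A)`: the smallest closed ideal containing `A`. -/
def idealGen (A : Set E) : Set E := ⋂₀ {S | IsClosedIdeal S ∧ A ⊆ S}

/-- A band: a closed ideal closed under existing suprema. -/
def IsBand (S : Set E) : Prop :=
  IsClosedIdeal S ∧ ∀ D ⊆ S, ∀ x : E, IsLUB D x → x ∈ S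

/-- `B(A)`: the smallest band containing `A`. -/
def bandGen (A : Set E) : Set E := ⋂₀ {S | IsBand S ∧ A ⊆ S}

/-- Disjoint complement of a set. -/
def disjComplement (A : Set E) : Set E := {x : E | ∀ y ∈ A, |x| ⊓ |y| = 0}

end LatDefs

/-- Order continuity of the norm: every downward directed set with infimum `0`
has norms converging to `0` along the order. -/
def OrderContinuousBL (E : Type*) [NormedAddCommGroup E] [Lattice E] : Prop :=
  ∀ D : Set E, D.Nonempty → DirectedOn (· ≥ ·) D → IsGLB D 0 →
    ∀ ε > 0, ∃ d ∈ D, ∀ e ∈ D, e ≤ d → ‖e‖ < ε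

/-- Density character of a topological space. -/
noncomputable def densChar (T : Type*) [TopologicalSpace T] : Cardinal :=
  sInf {c : Cardinal | ∃ s : Set T, Dense s ∧ Cardinal.mk s = c}


/-!
The preimage of a closed ideal under a continuous lattice homomorphism is again a closed ideal,
since `T |x| = |T x|` and `T` is monotone. So `T⁻¹' I(T(K))` is a closed ideal containing `K`,
hence all of `X`; thus `I(T(K))` is a closed set containing the dense range of `T`, i.e. all of `Y`.
A continuous linear map is weak-to-weak continuous, so it preserves weak compactness as well.
-/

section IdealGen

variable {E : Type*} [NormedAddCommGroup E] [Lattice E] [NormedSpace ℝ E]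

theorem subset_idealGen (A : Set E) : A ⊆ idealGen A :=
  fun _ hx _ hS => hS.2 hx

theorem idealGen_subset {A S : Set E} (hS : IsClosedIdeal S) (hAS : A ⊆ S) : idealGen A ⊆ S :=
  sInter_subset_of_mem ⟨hS, hAS⟩

theorem isClosedIdeal_idealGen (A : Set E) : IsClosedIdeal (idealGen A) := by
  refine ⟨isClosed_sInter fun S hS => hS.1.1, fun S hS => hS.1.2.1, ?_, ?_, ?_⟩
  · exact fun x hx y hy S hS => hS.1.2.2.1 x (hx S hS) y (hy S hS)
  · exact fun c x hx S hS => hS.1.2.2.2.1 c x (hx S hS)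
  · exact fun x y hy hxy S hS => hS.1.2.2.2.2 x y (hy S hS) hxy

end IdealGen

section LatticeHom

variable {E F : Type*} [NormedAddCommGroup E] [Lattice E] [NormedSpace ℝ E]
  [NormedAddCommGroup F] [Lattice F] [NormedSpace ℝ F]
  {T : E →L[ℝ] F}

theorem monotone_of_map_sup (hT : ∀ x y : E, T (x ⊔ y) = T x ⊔ T y) : Monotone T := by
  intro x y hxy
  rw [← sup_eq_right, ← hT, sup_eq_right.mpr hxy]

theorem map_abs_of_map_sup (hT : ∀ x y : E, T (x ⊔ y) = T x ⊔ T y) (x : E) : T |x| = |T x| := by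
  simp only [abs, hT, map_neg]

theorem IsClosedIdeal.preimage_of_map_sup {S : Set F} (hS : IsClosedIdeal S)
    (hT : ∀ x y : E, T (x ⊔ y) = T x ⊔ T y) : IsClosedIdeal (T ⁻¹' S) := by
  obtain ⟨hclosed, hzero, hadd, hsmul, hsolid⟩ := hS
  refine ⟨hclosed.preimage T.continuous, by simpa using hzero, ?_, ?_, ?_⟩
  · intro x hx y hy
    simpa using hadd _ hx _ hy
  · intro c x hx
    simpa using hsmul c _ hx
  · intro x y hy hxy
    have hTxy : |T x| ≤ |T y| := by
      simpa only [map_abs_of_map_sup hT] using monotone_of_map_sup hT hxy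
    exact hsolid _ _ hy hTxy

theorem idealGen_image_eq_univ_of_denseRange (hT : ∀ x y : E, T (x ⊔ y) = T x ⊔ T y)
    (hdense : DenseRange T) {K : Set E} (hK : idealGen K = univ) :
    idealGen (T '' K) = univ := by
  have hideal := isClosedIdeal_idealGen (T '' K)
  have hrange : range T ⊆ idealGen (T '' K) := by
    have hpre : idealGen K ⊆ T ⁻¹' idealGen (T '' K) :=
      idealGen_subset (hideal.preimage_of_map_sup hT)
        (image_subset_iff.mp (subset_idealGen _))
    rw [hK] at hpre
    rintro _ ⟨x, rfl⟩
    exact hpre (mem_univ x)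
  exact eq_univ_of_forall fun y => hideal.1.closure_subset_iff.mpr hrange (hdense y)

end LatticeHom

section WeaklyCompact

variable {E F : Type*} [NormedAddCommGroup E] [NormedSpace ℝ E] [NormedAddCommGroup F] [NormedSpace ℝ F]

theorem WeaklyCompact.image {K : Set E} (hK : WeaklyCompact K) (T : E →L[ℝ] F) :
    WeaklyCompact (T '' K) := by
  have himage := IsCompact.image hK (WeakSpace.map T).continuous
  rw [image_image] at himage
  rwa [WeaklyCompact, image_image]

end WeaklyCompact

theorem intervalPreserving_latticeHom_denseRange_IWCG_general
    {X Y : Type*} [NormedAddCommGroup X] [Lattice X] [NormedSpace ℝ X]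
    [NormedAddCommGroup Y] [Lattice Y] [NormedSpace ℝ Y]
    (T : X →L[ℝ] Y) (hlat : ∀ x y : X, T (x ⊔ y) = T x ⊔ T y)
    (hdense : DenseRange T) :
    (∀ K : Set X, idealGen K = Set.univ → idealGen (T '' K) = Set.univ) ∧
    ((∃ K : Set X, WeaklyCompact K ∧ idealGen K = Set.univ) →
      ∃ K' : Set Y, WeaklyCompact K' ∧ idealGen K' = Set.univ) := by
  have hgen (K : Set X) (hK : idealGen K = Set.univ) : idealGen (T '' K) = Set.univ :=
    idealGen_image_eq_univ_of_denseRange hlat hdense hK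
  refine ⟨hgen, ?_⟩
  rintro ⟨K, hKwc, hK⟩
  exact ⟨T '' K, hKwc.image T, hgen K hK⟩

/-- a dense-range interval preserving lattice homomorphism sends
ideal-generating sets to ideal-generating sets; consequently, such an image of an
IWCG lattice is IWCG. -/
theorem intervalPreserving_latticeHom_denseRange_IWCG
    {X Y : Type*} [NormedAddCommGroup X] [Lattice X] [IsOrderedAddMonoid X] [HasSolidNorm X] [NormedSpace ℝ X] [CompleteSpace X]
    [NormedAddCommGroup Y] [Lattice Y] [IsOrderedAddMonoid Y] [HasSolidNorm Y] [NormedSpace ℝ Y] [CompleteSpace Y]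
    (T : X →L[ℝ] Y) (hlat : ∀ x y : X, T (x ⊔ y) = T x ⊔ T y)
    (hpos : ∀ x : X, 0 ≤ x → 0 ≤ T x)
    (hint : ∀ x : X, 0 ≤ x → T '' Set.Icc 0 x = Set.Icc 0 (T x))
    (hdense : DenseRange T) :
    (∀ K : Set X, idealGen K = Set.univ → idealGen (T '' K) = Set.univ) ∧
    ((∃ K : Set X, WeaklyCompact K ∧ idealGen K = Set.univ) →
      ∃ K' : Set Y, WeaklyCompact K' ∧ idealGen K' = Set.univ) :=
  intervalPreserving_latticeHom_denseRange_IWCG_general T hlat hdense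
end

section
/- Let X be a Banach lattice whose dual X* is w*-separable. Then X is LWCG if and only if X is separable. -/
open Filter Topology Set

/-!
If `X` is separable, a dense sequence rescaled to a null sequence is, together with `0`, norm
compact and hence weakly compact, and every closed sublattice containing it is `X`.

Conversely, a countable weak*-dense subset of `X*` separates the points of `X`, so it maps a weakly
compact `K` continuously and injectively into `ℝ^ℕ`; thus `K` is weakly metrizable and has a
countable weakly dense subset `D`. The closure of the lattice-linear span of `D` is a separable
closed sublattice; being convex, it is weakly closed, so it contains `K` and therefore `L(K) = X`.
-/

namespace TopologicalSpace

variable {α β γ : Type*} [TopologicalSpace α] [TopologicalSpace β] [TopologicalSpace γ]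

theorem IsSeparable.image2 {f : α → β → γ} (hf : Continuous (Function.uncurry f)) {s : Set α}
    {t : Set β} (hs : IsSeparable s) (ht : IsSeparable t) : IsSeparable (image2 f s t) := by
  rw [← image_uncurry_prod]
  exact (hs.prod ht).image hf

end TopologicalSpace

open TopologicalSpace

theorem IsCompact.isSeparable_of_continuous_of_injOn {α β : Type*} [TopologicalSpace α]
    [TopologicalSpace β] [T2Space β] [SecondCountableTopology β] {K : Set α} (hK : IsCompact K)
    {f : α → β} (hf : Continuous f) (hinj : InjOn f K) : IsSeparable K := by
  have : CompactSpace K := isCompact_iff_compactSpace.1 hK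
  have hemb : Topology.IsEmbedding (K.domRestrict f) :=
    (hf.comp continuous_subtype_val).isClosedEmbedding hinj.injective |>.isEmbedding
  have : SecondCountableTopology K := hemb.secondCountableTopology
  exact .of_subtype K

theorem Dense.exists_apply_ne_of_ne {E : Type*} [AddCommGroup E] [TopologicalSpace E]
    [Module ℝ E] [SeparatingDual ℝ E] {s : Set (WeakDual ℝ E)} (hs : Dense s) {x y : E}
    (hxy : x ≠ y) : ∃ f ∈ s, f x ≠ f y := by
  obtain ⟨g, hg⟩ := SeparatingDual.exists_separating_of_ne (R := ℝ) hxy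
  exact hs.exists_mem_open (isOpen_ne_fun (WeakDual.eval_continuous x) (WeakDual.eval_continuous y))
    ⟨StrongDual.toWeakDual g, hg⟩

section NormedSpace

variable {E : Type*} [NormedAddCommGroup E] [NormedSpace ℝ E]

theorem IsCompact.weaklyCompact {K : Set E} (hK : IsCompact K) : WeaklyCompact K :=
  hK.image (toWeakSpaceCLM ℝ E).continuous

theorem Convex.isClosed_image_toWeakSpace {s : Set E} (hconv : Convex ℝ s) (hs : IsClosed s) :
    IsClosed (toWeakSpace ℝ E '' s) := by
  rw [← hs.closure_eq, hconv.toWeakSpace_closure ℝ]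
  exact isClosed_closure

theorem WeaklyCompact.isSeparable_image_toWeakSpace [SeparableSpace (WeakDual ℝ E)] {K : Set E}
    (hK : WeaklyCompact K) : IsSeparable (toWeakSpace ℝ E '' K) := by
  obtain ⟨s, hsc, hsd⟩ := exists_countable_dense (WeakDual ℝ E)
  have : Countable s := hsc.to_subtype
  refine hK.isSeparable_of_continuous_of_injOn
    (f := fun z (f : s) => (f : WeakDual ℝ E) ((toWeakSpace ℝ E).symm z))
    (continuous_pi fun f => WeakBilin.eval_continuous _ (f : WeakDual ℝ E)) ?_
  intro a _ b _ hab
  by_contra hne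
  obtain ⟨f, hf, hfab⟩ := hsd.exists_apply_ne_of_ne ((toWeakSpace ℝ E).symm.injective.ne hne)
  exact hfab (congrFun hab ⟨f, hf⟩)

theorem exists_pos_smul_tendsto_zero (u : ℕ → E) :
    ∃ c : ℕ → ℝ, (∀ n, 0 < c n) ∧ Tendsto (fun n => c n • u n) atTop (𝓝 0) := by
  refine ⟨fun n => ((n + 1) * (‖u n‖ + 1))⁻¹, fun n => by positivity, ?_⟩
  refine squeeze_zero_norm (fun n => ?_) tendsto_one_div_add_atTop_nhds_zero_nat
  have hn : (0 : ℝ) < n + 1 := by positivity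
  dsimp only
  rw [norm_smul, Real.norm_of_nonneg (by positivity), inv_mul_le_iff₀ (by positivity), one_div,
    mul_right_comm, mul_inv_cancel₀ hn.ne', one_mul]
  linarith

end NormedSpace

section Lattice

variable {E : Type*} [NormedAddCommGroup E] [Lattice E] [NormedSpace ℝ E]

theorem IsClosedSublattice.convex {S : Set E} (hS : IsClosedSublattice S) : Convex ℝ S :=
  fun _ hx _ hy a b _ _ _ => hS.2.2.1 _ (hS.2.2.2.1 a _ hx) _ (hS.2.2.2.1 b _ hy)

theorem exists_weaklyCompact_sublatticeGen_eq_univ [SeparableSpace E] :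
    ∃ K : Set E, WeaklyCompact K ∧ sublatticeGen K = univ := by
  obtain ⟨c, hc, hlim⟩ := exists_pos_smul_tendsto_zero (denseSeq E)
  refine ⟨insert 0 (range fun n => c n • denseSeq E n), hlim.isCompact_insert_range.weaklyCompact,
    eq_univ_of_forall fun x => mem_sInter.2 ?_⟩
  rintro S ⟨⟨hSc, -, -, hsmul, -, -⟩, hKS⟩
  refine closure_minimal ?_ hSc (denseRange_denseSeq E x)
  rintro _ ⟨n, rfl⟩
  simpa [smul_smul, (hc n).ne'] using hsmul (c n)⁻¹ _ (hKS (mem_insert_of_mem _ ⟨n, rfl⟩))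

def latticeStep (s : Set E) : Set E :=
  s ∪ image2 (· + ·) s s ∪ image2 (· • ·) (univ : Set ℝ) s ∪ image2 (· ⊔ ·) s s ∪
    image2 (· ⊓ ·) s s

def latticeSpan (s : Set E) : Set E := ⋃ n, latticeStep^[n] (insert 0 s)

theorem subset_latticeStep (s : Set E) : s ⊆ latticeStep s :=
  fun _ hx => Or.inl (Or.inl (Or.inl (Or.inl hx)))

theorem subset_latticeSpan (s : Set E) : s ⊆ latticeSpan s :=
  fun _ hx => mem_iUnion.2 ⟨0, mem_insert_of_mem 0 hx⟩

theorem zero_mem_latticeSpan (s : Set E) : (0 : E) ∈ latticeSpan s :=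
  mem_iUnion.2 ⟨0, mem_insert 0 s⟩

theorem exists_mem_iterate_latticeStep {s : Set E} {x y : E} (hx : x ∈ latticeSpan s)
    (hy : y ∈ latticeSpan s) :
    ∃ n, x ∈ latticeStep^[n] (insert 0 s) ∧ y ∈ latticeStep^[n] (insert 0 s) := by
  have hmono : Monotone fun n => latticeStep^[n] (insert 0 s) :=
    monotone_nat_of_le_succ fun n => by
      rw [Function.iterate_succ_apply']
      exact subset_latticeStep _
  obtain ⟨m, hm⟩ := mem_iUnion.1 hx
  obtain ⟨n, hn⟩ := mem_iUnion.1 hy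
  exact ⟨max m n, hmono (le_max_left m n) hm, hmono (le_max_right m n) hn⟩

theorem image2_subset_latticeSpan {s : Set E} {op : E → E → E}
    (hop : ∀ t : Set E, image2 op t t ⊆ latticeStep t) :
    image2 op (latticeSpan s) (latticeSpan s) ⊆ latticeSpan s := by
  rintro _ ⟨x, hx, y, hy, rfl⟩
  obtain ⟨n, hxn, hyn⟩ := exists_mem_iterate_latticeStep hx hy
  refine mem_iUnion.2 ⟨n + 1, ?_⟩
  rw [Function.iterate_succ_apply']
  exact hop _ (mem_image2_of_mem hxn hyn)

theorem smul_mem_latticeSpan {s : Set E} (c : ℝ) {x : E} (hx : x ∈ latticeSpan s) :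
    c • x ∈ latticeSpan s := by
  obtain ⟨n, hxn, -⟩ := exists_mem_iterate_latticeStep hx hx
  refine mem_iUnion.2 ⟨n + 1, ?_⟩
  rw [Function.iterate_succ_apply']
  exact Or.inl (Or.inl (Or.inr (mem_image2_of_mem (mem_univ c) hxn)))

variable [TopologicalLattice E]

theorem isClosedSublattice_closure_latticeSpan (s : Set E) :
    IsClosedSublattice (closure (latticeSpan s)) := by
  have hadd := image2_subset_latticeSpan (s := s) (op := (· + ·))
    fun _ _ h => Or.inl (Or.inl (Or.inl (Or.inr h)))
  have hsup := image2_subset_latticeSpan (s := s) (op := (· ⊔ ·)) fun _ _ h => Or.inl (Or.inr h)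
  have hinf := image2_subset_latticeSpan (s := s) (op := (· ⊓ ·)) fun _ _ h => Or.inr h
  refine ⟨isClosed_closure, subset_closure (zero_mem_latticeSpan s), fun x hx y hy => ?_,
    fun c x hx => ?_, fun x hx y hy => ?_, fun x hx y hy => ?_⟩
  · exact map_mem_closure₂ continuous_add hx hy fun a ha b hb => hadd ⟨a, ha, b, hb, rfl⟩
  · exact map_mem_closure (continuous_const_smul c) hx fun a ha => smul_mem_latticeSpan c ha
  · exact map_mem_closure₂ continuous_sup hx hy fun a ha b hb => hsup ⟨a, ha, b, hb, rfl⟩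
  · exact map_mem_closure₂ continuous_inf hx hy fun a ha b hb => hinf ⟨a, ha, b, hb, rfl⟩

theorem TopologicalSpace.IsSeparable.latticeStep {s : Set E} (hs : IsSeparable s) :
    IsSeparable (latticeStep s) :=
  (((hs.union (hs.image2 continuous_add hs)).union
    ((IsSeparable.of_separableSpace univ).image2 continuous_smul hs)).union
    (hs.image2 continuous_sup hs)).union (hs.image2 continuous_inf hs)

theorem TopologicalSpace.IsSeparable.latticeSpan {s : Set E} (hs : IsSeparable s) :
    IsSeparable (latticeSpan s) := by
  refine .iUnion fun n => ?_
  induction n with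
  | zero => exact (countable_singleton 0).isSeparable.union hs
  | succ n ih =>
    rw [Function.iterate_succ_apply']
    exact ih.latticeStep

theorem exists_isClosedSublattice_isSeparable_superset {s : Set E} (hs : IsSeparable s) :
    ∃ S, IsClosedSublattice S ∧ s ⊆ S ∧ IsSeparable S :=
  ⟨closure (latticeSpan s), isClosedSublattice_closure_latticeSpan s,
    (subset_latticeSpan s).trans subset_closure, hs.latticeSpan.closure⟩

theorem separableSpace_of_weaklyCompact_sublatticeGen_eq_univ [SeparableSpace (WeakDual ℝ E)]
    {K : Set E} (hK : WeaklyCompact K) (hKgen : sublatticeGen K = univ) : SeparableSpace E := by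
  obtain ⟨C, hCc, hKC⟩ := hK.isSeparable_image_toWeakSpace
  obtain ⟨S, hS, hCS, hSsep⟩ :=
    exists_isClosedSublattice_isSeparable_superset (hCc.image (toWeakSpace ℝ E).symm).isSeparable
  have hKS : K ⊆ S := by
    rw [← image_subset_image_iff (toWeakSpace ℝ E).injective]
    refine hKC.trans (closure_minimal (fun z hz => ?_) (hS.convex.isClosed_image_toWeakSpace hS.1))
    exact ⟨_, hCS (mem_image_of_mem _ hz), LinearEquiv.apply_symm_apply _ z⟩
  have hSuniv : S = univ := eq_univ_of_univ_subset (hKgen ▸ sInter_subset_of_mem ⟨hS, hKS⟩)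
  exact isSeparable_univ_iff.1 (hSuniv ▸ hSsep)

end Lattice

theorem LWCG_iff_separable_of_wstar_separable_dual_general
    {X : Type*} [NormedAddCommGroup X] [Lattice X] [HasSolidNorm X] [IsOrderedAddMonoid X]
    [NormedSpace ℝ X]
    (hsep : TopologicalSpace.SeparableSpace (WeakDual ℝ X)) :
    (∃ K : Set X, WeaklyCompact K ∧ sublatticeGen K = Set.univ) ↔
      TopologicalSpace.SeparableSpace X :=
  ⟨fun ⟨_, hK, hKgen⟩ => separableSpace_of_weaklyCompact_sublatticeGen_eq_univ hK hKgen,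
    fun _ => exists_weaklyCompact_sublatticeGen_eq_univ⟩

/-- if X* is w*-separable, then X is LWCG iff X is separable. -/
theorem LWCG_iff_separable_of_wstar_separable_dual
    {X : Type*} [NormedAddCommGroup X] [Lattice X] [HasSolidNorm X] [IsOrderedAddMonoid X]
    [NormedSpace ℝ X] [CompleteSpace X]
    (hsep : TopologicalSpace.SeparableSpace (WeakDual ℝ X)) :
    (∃ K : Set X, WeaklyCompact K ∧ sublatticeGen K = Set.univ) ↔
      TopologicalSpace.SeparableSpace X :=
  LWCG_iff_separable_of_wstar_separable_dual_general hsep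
end
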